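/- The x-coordinate x₂(β) of the L₂ libration point of the photo-gravitational CR3BP is strictly decreasing in β: increasing the lightness number displaces L₂ towards the Sun, bringing it closer to the asteroid's surface. -/
import Mathlib


/-- The L₂ point of the photo-gravitational CR3BP is strictly decreasing in the
lightness number β: increasing β displaces L₂ towards the Sun. -/
theorem L2_strictly_decreasing_in_beta
    (μ β₁ β₂ x₁ x₂ : ℝ)
    (hμ : μ ∈ Set.Ioo (0 : ℝ) 1)
    (hβ₁ : β₁ ∈ Set.Ico (0 : ℝ) 1) (hβ₂ : β₂ ∈ Set.Ico (0 : ℝ) 1)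
    (hββ : β₁ < β₂)
    (h1 : 1 - μ < x₁) (h2 : 1 - μ < x₂)
    (e1 : x₁ - (1 - μ) * (1 - β₁) / (x₁ + μ) ^ 2 - μ / (x₁ + μ - 1) ^ 2 = 0)
    (e2 : x₂ - (1 - μ) * (1 - β₂) / (x₂ + μ) ^ 2 - μ / (x₂ + μ - 1) ^ 2 = 0) :
    x₂ < x₁ := by
  obtain ⟨hμ0, hμ1⟩ := hμ
  obtain ⟨hb10, hb11⟩ := hβ₁
  obtain ⟨hb20, hb21⟩ := hβ₂
  by_contra h
  push_neg at h
  have hA1 : (0:ℝ) < x₁ + μ - 1 := by linarith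
  have hA2 : (0:ℝ) < x₂ + μ - 1 := by linarith
  have hB1 : (0:ℝ) < x₁ + μ := by linarith
  have k1 : (1 - μ) * (1 - β₂) / (x₁ + μ) ^ 2 < (1 - μ) * (1 - β₁) / (x₁ + μ) ^ 2 := by
    exact div_lt_div_of_pos_right (by nlinarith) (by positivity)
  have k2 : (1 - μ) * (1 - β₂) / (x₂ + μ) ^ 2 ≤ (1 - μ) * (1 - β₂) / (x₁ + μ) ^ 2 := by
    exact div_le_div_of_nonneg_left (by nlinarith) (by positivity) (by nlinarith)
  have k3 : μ / (x₂ + μ - 1) ^ 2 ≤ μ / (x₁ + μ - 1) ^ 2 := by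
    exact div_le_div_of_nonneg_left hμ0.le (by positivity) (by nlinarith)
  linarith
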